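/- (Eligibility is necessary for satisfiability.) Let φ be a CaTL formula in which every task has duration d ≥ 1 and every task's proposition π satisfies L⁻¹(π) ≠ ∅. Let s_J be the team trajectory of the full team J, and let α be an assignment such that for every leaf λ carrying a task with proposition π_λ, α(λ) contains every agent j ∈ J for which there exist τ ∈ ℕ and q ∈ Q with s_j τ = some q and π_λ ∈ L(q). If (s_J, 0) ⊨ φ, then α is eligible for the syntax tree T_φ, i.e., ce(α, v_0)(c) ≥ 0 for every capability c ∈ Cap. -/

import Mathlib

open scoped Classical

/-- A CaTL task `T = (d, π, cp_T, cp)`: a duration, an atomic proposition, a nonempty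
finite set of required capabilities, and a counting map. -/
structure CTask (AP Cap : Type) where
  dur : ℕ
  prop : AP
  cpT : Finset Cap
  cpT_nonempty : cpT.Nonempty
  cp : Cap → ℤ

/-- CaTL formulas: `φ ::= T | φ₁ ∧ φ₂ | φ₁ ∨ φ₂ | φ₁ U_[a,b] φ₂ | F_[a,b] φ | G_[a,b] φ`
with `a ≤ b`. -/
inductive CaTL (AP Cap : Type) : Type where
  | task (T : CTask AP Cap)
  | and (φ₁ φ₂ : CaTL AP Cap)
  | or (φ₁ φ₂ : CaTL AP Cap)
  | untl (a b : ℕ) (hab : a ≤ b) (φ₁ φ₂ : CaTL AP Cap)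
  | ev (a b : ℕ) (hab : a ≤ b) (φ : CaTL AP Cap)
  | alw (a b : ℕ) (hab : a ≤ b) (φ : CaTL AP Cap)

/-- CaTL syntax trees with an assignment of agents baked into the leaves:
each leaf (task occurrence) `λ` carries the set `A = α(λ) ⊆ J` of agents assigned to it. -/
inductive ATree (AP Cap J : Type) : Type where
  | leaf (T : CTask AP Cap) (A : Finset J)
  | and (l r : ATree AP Cap J)
  | or (l r : ATree AP Cap J)
  | untl (a b : ℕ) (hab : a ≤ b) (l r : ATree AP Cap J)
  | ev (a b : ℕ) (hab : a ≤ b) (c : ATree AP Cap J)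
  | alw (a b : ℕ) (hab : a ≤ b) (c : ATree AP Cap J)

variable {Q AP Cap J : Type}

/-- `n_{q,c}^{J'}(t)`: the number of agents `j ∈ J'` with `s j t = some q` and `c ∈ Cap_j`. -/
noncomputable def nAgents (caps : J → Finset Cap) (s : J → ℕ → Option Q)
    (J' : Finset J) (q : Q) (c : Cap) (t : ℕ) : ℕ :=
  (J'.filter (fun j => s j t = some q ∧ c ∈ caps j)).card

/-- Qualitative CaTL semantics: `(s_{J'}, t) ⊨ φ`. -/
def sat (L : Q → Set AP) (caps : J → Finset Cap) (s : J → ℕ → Option Q)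
    (J' : Finset J) : CaTL AP Cap → ℕ → Prop
  | .task T, t => ∀ τ, t ≤ τ → τ < t + T.dur → ∀ q, T.prop ∈ L q → ∀ c ∈ T.cpT,
      (T.cp c : ℤ) ≤ (nAgents caps s J' q c τ : ℤ)
  | .and φ₁ φ₂, t => sat L caps s J' φ₁ t ∧ sat L caps s J' φ₂ t
  | .or φ₁ φ₂, t => sat L caps s J' φ₁ t ∨ sat L caps s J' φ₂ t
  | .untl a b _ φ₁ φ₂, t => ∃ t', t + a ≤ t' ∧ t' ≤ t + b ∧ sat L caps s J' φ₂ t' ∧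
      ∀ τ, t ≤ τ → τ ≤ t' → sat L caps s J' φ₁ τ
  | .ev a b _ φ, t => ∃ τ, t + a ≤ τ ∧ τ ≤ t + b ∧ sat L caps s J' φ τ
  | .alw a b _ φ, t => ∀ τ, t + a ≤ τ → τ ≤ t + b → sat L caps s J' φ τ

/-- The CaTL formula whose syntax tree is the given tree (forgetting the assignment). -/
def ATree.formula : ATree AP Cap J → CaTL AP Cap
  | .leaf T _ => .task T
  | .and l r => .and l.formula r.formula
  | .or l r => .or l.formula r.formula
  | .untl a b h l r => .untl a b h l.formula r.formula
  | .ev a b h c => .ev a b h c.formula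
  | .alw a b h c => .alw a b h c.formula

/-- Capability excess `ce(α, v) : Cap → ℤ ∪ {+∞}` (embedded in `EReal`):
at a leaf it is the number of assigned agents with capability `c` minus `cp(c)` for
required capabilities and `+∞` otherwise; at a disjunction it is the componentwise max
of the children; at every other internal node it is the componentwise min. -/
noncomputable def ATree.ce (caps : J → Finset Cap) : ATree AP Cap J → Cap → EReal
  | .leaf T A, c =>
      if c ∈ T.cpT then (((((A.filter (fun j => c ∈ caps j)).card : ℤ) - T.cp c : ℤ) : ℝ) : EReal)
      else (⊤ : EReal)
  | .and l r, c => min (l.ce caps c) (r.ce caps c)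
  | .or l r, c => max (l.ce caps c) (r.ce caps c)
  | .untl _ _ _ l r, c => min (l.ce caps c) (r.ce caps c)
  | .ev _ _ _ t, c => t.ce caps c
  | .alw _ _ _ t, c => t.ce caps c

/-- An assignment is eligible for a syntax tree if the capability excess at the root
is nonnegative for every capability. -/
def ATree.elig (caps : J → Finset Cap) (T : ATree AP Cap J) : Prop :=
  ∀ c : Cap, 0 ≤ T.ce caps c

/-- Hypotheses on the leaves: every task has duration `d ≥ 1`, its proposition labels
some state, and the assignment of every leaf contains every agent that ever occupies a
state labeled by the leaf's proposition. -/
def ATree.goodLeaves (L : Q → Set AP) (s : J → ℕ → Option Q) : ATree AP Cap J → Prop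
  | .leaf T A => 1 ≤ T.dur ∧ (∃ q, T.prop ∈ L q) ∧
      ∀ j : J, (∃ τ q, s j τ = some q ∧ T.prop ∈ L q) → j ∈ A
  | .and l r => l.goodLeaves L s ∧ r.goodLeaves L s
  | .or l r => l.goodLeaves L s ∧ r.goodLeaves L s
  | .untl _ _ _ l r => l.goodLeaves L s ∧ r.goodLeaves L s
  | .ev _ _ _ c => c.goodLeaves L s
  | .alw _ _ _ c => c.goodLeaves L s

section

variable {L : Q → Set AP} {caps : J → Finset Cap} {s : J → ℕ → Option Q} {J' : Finset J}

theorem nAgents_le_card_filter {A : Finset J} {q : Q} {c : Cap} {t : ℕ}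
    (hA : ∀ j ∈ J', s j t = some q → j ∈ A) :
    nAgents caps s J' q c t ≤ (A.filter (fun j => c ∈ caps j)).card := by
  refine Finset.card_le_card fun j hj => ?_
  rw [Finset.mem_filter] at hj ⊢
  exact ⟨hA j hj.1 hj.2.1, hj.2.2⟩

/-- A task of positive duration is checked in particular at its start time `t`, where every
agent counted at a `π`-labelled state belongs to the leaf's assignment. -/
theorem ATree.ce_leaf_nonneg {T : CTask AP Cap} {A : Finset J} {t : ℕ}
    (hg : (ATree.leaf T A).goodLeaves L s) (hsat : sat L caps s J' (.task T) t) (c : Cap) :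
    0 ≤ (ATree.leaf T A).ce caps c := by
  obtain ⟨hdur, ⟨q, hq⟩, hA⟩ := hg
  rw [ATree.ce]
  split_ifs with hc
  · have hcount := hsat t le_rfl (by omega) q hq c hc
    have hle : nAgents caps s J' q c t ≤ (A.filter (fun j => c ∈ caps j)).card :=
      nAgents_le_card_filter fun j _ hj => hA j ⟨t, q, hj, hq⟩
    exact_mod_cast sub_nonneg.mpr (hcount.trans (by exact_mod_cast hle))
  · exact le_top

theorem ATree.ce_nonneg_of_sat (T : ATree AP Cap J) (hg : T.goodLeaves L s) {t : ℕ}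
    (hsat : sat L caps s J' T.formula t) (c : Cap) : 0 ≤ T.ce caps c := by
  induction T generalizing t with
  | leaf T A => exact ATree.ce_leaf_nonneg hg hsat c
  | and l r ihl ihr => exact le_min (ihl hg.1 hsat.1) (ihr hg.2 hsat.2)
  | or l r ihl ihr =>
    rcases hsat with hl | hr
    · exact le_max_of_le_left (ihl hg.1 hl)
    · exact le_max_of_le_right (ihr hg.2 hr)
  | untl a b _ l r ihl ihr =>
    obtain ⟨t', hat', -, hr, hl⟩ := hsat
    exact le_min (ihl hg.1 (hl t le_rfl (by omega))) (ihr hg.2 hr)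
  | ev a b _ φ ih =>
    obtain ⟨τ, -, -, hτ⟩ := hsat
    exact ih hg hτ
  | alw a b hab φ ih => exact ih hg (hsat (t + a) le_rfl (by omega))

end

theorem eligibility_necessary_for_satisfiability_general
    [Fintype J]
    (L : Q → Set AP) (caps : J → Finset Cap) (s : J → ℕ → Option Q)
    (T : ATree AP Cap J) (hT : T.goodLeaves L s)
    (hsat : sat L caps s Finset.univ T.formula 0) :
    ∀ c : Cap, 0 ≤ T.ce caps c :=
  T.ce_nonneg_of_sat hT hsat

/-- eligibility is necessary for satisfiability.  If the full team
satisfies `φ` at time `0`, then the assignment (whose leaves contain every agent that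
could possibly service them) is eligible: the capability excess at the root is
nonnegative for every capability. -/
theorem eligibility_necessary_for_satisfiability
    [Fintype Q] [Fintype Cap] [Fintype J] [DecidableEq J]
    (L : Q → Set AP) (caps : J → Finset Cap) (s : J → ℕ → Option Q)
    (T : ATree AP Cap J) (hT : T.goodLeaves L s)
    (hsat : sat L caps s Finset.univ T.formula 0) :
    ∀ c : Cap, 0 ≤ T.ce caps c :=
  eligibility_necessary_for_satisfiability_general L caps s T hT hsat
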